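/- arXiv:1302.7040 — 5 statements merged into one kernel-verified Lean document; each statement's English description precedes it below -/
import Mathlib

section
/- Let n ∈ ℕ and let p, q be nonzero real numbers satisfying condition (★). Then for every pair of n×n positive definite complex matrices A, B, the matrix power mean inequality ((A^p + B^p)/2)^{1/p} ≤ ((A^q + B^q)/2)^{1/q} holds. -/
open scoped ComplexOrder

/-- Real functional calculus for Hermitian complex matrices, via the spectral theorem
(junk value `0` for non-Hermitian matrices). -/
noncomputable def Matrix.cfcReal {n : Type*} [Fintype n] [DecidableEq n]
    (f : ℝ → ℝ) (A : Matrix n n ℂ) : Matrix n n ℂ :=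
  if hA : A.IsHermitian then
    (hA.eigenvectorUnitary : Matrix n n ℂ) *
      Matrix.diagonal (fun i => (f (hA.eigenvalues i) : ℂ)) *
      star (hA.eigenvectorUnitary : Matrix n n ℂ)
  else 0

/-- The real power `A ^ r` of a Hermitian (in particular, positive definite) matrix,
defined by functional calculus, with the conventions `0 ^ r = 0` for `r ≠ 0` and `x ^ 0 = 1`. -/
noncomputable def Matrix.rpowH {n : Type*} [Fintype n] [DecidableEq n]
    (A : Matrix n n ℂ) (r : ℝ) : Matrix n n ℂ :=
  Matrix.cfcReal (fun t => t ^ r) A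

/-- The logarithm of a positive definite matrix, by functional calculus. -/
noncomputable def Matrix.logH {n : Type*} [Fintype n] [DecidableEq n]
    (A : Matrix n n ℂ) : Matrix n n ℂ :=
  Matrix.cfcReal Real.log A

/-- The exponential of a Hermitian matrix, by functional calculus. -/
noncomputable def Matrix.expH {n : Type*} [Fintype n] [DecidableEq n]
    (A : Matrix n n ℂ) : Matrix n n ℂ :=
  Matrix.cfcReal Real.exp A

/-- Condition (★) on a pair `(p, q)` of real parameters. -/
def StarCond (p q : ℝ) : Prop :=
  p = q ∨ (1 ≤ p ∧ p < q) ∨ (p < q ∧ q ≤ -1) ∨ (p ≤ -1 ∧ 1 ≤ q) ∨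
    (1/2 ≤ p ∧ p < 1 ∧ 1 ≤ q) ∨ (p ≤ -1 ∧ -1 < q ∧ q ≤ -1/2)

/-!
For `p ≥ 1` the power means increase with `p` by operator concavity and operator monotonicity
(Löwner–Heinz) of `x ↦ x ^ r` for `r ∈ [0, 1]`: `(A^p + B^p)/2 ≤ ((A^q + B^q)/2)^(p/q)`, and
then one takes `1/p`-th powers. For `p ∈ [1/2, 1]`, `M_p ≤ M_1` is the operator convexity of
`x ↦ x ^ s`, `s = 1/p ∈ [1, 2]`, which follows from the integral representation of `x ^ s` by
integrands that are affine plus a positive multiple of a resolvent `(t + x)⁻¹`, together with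
the operator convexity of the inverse. That convexity also gives `M_{-1} ≤ M_1`, and negative
exponents reduce to positive ones through `M_{-p}(A, B) = M_p(A⁻¹, B⁻¹)⁻¹` and the operator
antitonicity of the inverse. Each case of (★) is a chain of these steps through `M_{-1}` and `M_1`.
-/

namespace CFC

open scoped NNReal
open Set MeasureTheory Real

section UnitalCStarAlgebra

variable {A : Type*} [CStarAlgebra A] [PartialOrder A] [StarOrderedRing A]

lemma convexOn_cfc_rpowIntegrand₁₂ {p t : ℝ} (ht : 0 < t) :
    ConvexOn ℝ (Ici (0 : A)) (cfc (rpowIntegrand₁₂ p t)) := by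
  have h₁ : (Ici (0 : A)).EqOn (cfc (rpowIntegrand₁₂ p t))
      (fun x : A => t ^ (p - 1) • (t⁻¹ • x + t • Ring.inverse (algebraMap ℝ A t + x) - 1)) := by
    intro x hx
    have hspectrum : ∀ r ∈ spectrum ℝ x, t + r ≠ 0 := by grind
    have hinv : ContinuousOn (fun z : ℝ => (t + z)⁻¹) (spectrum ℝ x) := by
      fun_prop (disch := grind -abstractProof)
    have hlin : ContinuousOn (fun z : ℝ => t⁻¹ * z) (spectrum ℝ x) := by fun_prop
    have hsum : ContinuousOn (fun z : ℝ => t⁻¹ * z + t * (t + z)⁻¹) (spectrum ℝ x) :=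
      hlin.add (hinv.const_smul t)
    change cfc (fun z => t ^ (p - 1) * (t⁻¹ * z + t * (t + z)⁻¹ - 1)) x = _
    rw [cfc_const_mul _ (fun z => t⁻¹ * z + t * (t + z)⁻¹ - 1) x (hsum.sub continuousOn_const),
      cfc_sub (fun z => t⁻¹ * z + t * (t + z)⁻¹) (fun _ => 1) x hsum continuousOn_const,
      cfc_add x (fun z => t⁻¹ * z) (fun z => t * (t + z)⁻¹) hlin (hinv.const_smul t),
      cfc_const_mul _ (fun z => (t + z)⁻¹) x hinv, cfc_const_mul_id _ x,
      cfc_inv (fun z => t + z) x hspectrum, cfc_const_add t (fun z => z) x, cfc_id' ℝ x,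
      cfc_const_one ℝ x]
  refine ConvexOn.congr (ConvexOn.smul (by positivity) ?_) h₁.symm
  refine ConvexOn.sub ?_ (concaveOn_const _ (convex_Ici 0))
  refine ConvexOn.add ?_ (ConvexOn.smul ht.le
    (CStarAlgebra.convexOn_ringInverse_algebraMap_add ht))
  exact (LinearMap.lsmul ℝ A t⁻¹).convexOn (convex_Ici 0)

end UnitalCStarAlgebra

section NonUnitalCStarAlgebra

variable {A : Type*} [NonUnitalCStarAlgebra A] [PartialOrder A] [StarOrderedRing A]

lemma convexOn_cfcₙ_rpowIntegrand₁₂ {p t : ℝ} (ht : 0 < t) :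
    ConvexOn ℝ (Ici (0 : A)) (cfcₙ (rpowIntegrand₁₂ p t)) := by
  apply CStarAlgebra.convexOn_cfcₙ_of_convexOn_cfc
  refine ConvexOn.subset (convexOn_cfc_rpowIntegrand₁₂ ht) CStarAlgebra.inr_map_Ici_zero ?_
  exact Convex.linear_image (convex_Ici _) (Unitization.inrHom ℝ ℂ A)

lemma convexOn_mul_self : ConvexOn ℝ (Ici (0 : A)) (fun a => a * a) := by
  refine ⟨convex_Ici 0, fun a ha b hb μ ν _ _ hμν => ?_⟩
  obtain rfl : ν = 1 - μ := by linarith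
  have key : μ • (a * a) + (1 - μ) • (b * b) - (μ • a + (1 - μ) • b) * (μ • a + (1 - μ) • b)
      = (μ * (1 - μ)) • (star (a - b) * (a - b)) := by
    rw [IsSelfAdjoint.star_eq ((IsSelfAdjoint.of_nonneg ha).sub (IsSelfAdjoint.of_nonneg hb))]
    simp only [add_mul, mul_add, sub_mul, mul_sub, smul_mul_assoc, mul_smul_comm]
    module
  rw [← sub_nonneg, key]
  exact smul_nonneg (by nlinarith) (star_mul_self_nonneg _)

lemma convexOn_nnrpow_Ioo {p : ℝ≥0} (hp : p ∈ Ioo 1 2) :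
    ConvexOn ℝ (Ici (0 : A)) (fun a : A => a ^ p) := by
  obtain ⟨μ, hμ⟩ := exists_measure_nnrpow_eq_integral_cfcₙ_rpowIntegrand₁₂ A hp
  refine ConvexOn.congr ?_ (fun a ha => ((hμ a ha).2).symm)
  refine integral_convexOn_of_integrand_ae (convex_Ici _) ?_ fun a ha => (hμ a ha).1
  filter_upwards [ae_restrict_mem measurableSet_Ioi] with t ht
  exact convexOn_cfcₙ_rpowIntegrand₁₂ ht

lemma convexOn_nnrpow {p : ℝ≥0} (hp : p ∈ Icc 1 2) :
    ConvexOn ℝ (Ici (0 : A)) (fun a : A => a ^ p) := by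
  rcases hp.1.eq_or_lt with rfl | hp₁
  · exact (convexOn_id (convex_Ici _)).congr nnrpow_one_eqOn.symm
  rcases hp.2.eq_or_lt with rfl | hp₂
  · exact convexOn_mul_self.congr fun a ha => (nnrpow_two a ha).symm
  exact convexOn_nnrpow_Ioo ⟨hp₁, hp₂⟩

end NonUnitalCStarAlgebra

section UnitalCStarAlgebra

variable {A : Type*} [CStarAlgebra A] [PartialOrder A] [StarOrderedRing A]

lemma ringInverse_rpow {a : A} (ha : IsStrictlyPositive a) (p : ℝ) :
    (Ring.inverse a) ^ p = a ^ (-p) := by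
  rw [inverse_eq_rpow_neg_one, rpow_rpow a _ _ (by norm_num), neg_one_mul]

lemma convexOn_rpow {p : ℝ} (hp : p ∈ Icc 1 2) :
    ConvexOn ℝ (Ici (0 : A)) (fun a : A => a ^ p) := by
  lift p to ℝ≥0 using by linarith [hp.1]
  simp_rw [← nnrpow_eq_rpow (by exact_mod_cast zero_lt_one.trans_le hp.1 : (0 : ℝ≥0) < p)]
  exact convexOn_nnrpow (by exact_mod_cast hp)

end UnitalCStarAlgebra

end CFC

section PowerMean

open CFC

variable {A : Type*} [CStarAlgebra A] [PartialOrder A] [StarOrderedRing A] {a b : A} {p q : ℝ}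

noncomputable def powerMean (p : ℝ) (a b : A) : A := ((2⁻¹ : ℝ) • (a ^ p + b ^ p)) ^ p⁻¹

lemma isStrictlyPositive_powerMean (ha : IsStrictlyPositive a) :
    IsStrictlyPositive (powerMean p a b) := by
  have hmean : IsStrictlyPositive ((2⁻¹ : ℝ) • (a ^ p + b ^ p)) :=
    .smul (by norm_num) ((ha.rpow a p).add_nonneg rpow_nonneg)
  exact hmean.rpow _ _

lemma powerMean_one (ha : 0 ≤ a) (hb : 0 ≤ b) : powerMean 1 a b = (2⁻¹ : ℝ) • (a + b) := by
  rw [powerMean, inv_one, rpow_one a, rpow_one b,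
    rpow_one _ (smul_nonneg (by norm_num) (add_nonneg ha hb))]

lemma powerMean_neg (ha : IsStrictlyPositive a) (hb : IsStrictlyPositive b) (hp : p ≠ 0) :
    powerMean (-p) a b = Ring.inverse (powerMean p (Ring.inverse a) (Ring.inverse b)) := by
  rw [powerMean, powerMean, ringInverse_rpow ha, ringInverse_rpow hb,
    inverse_rpow _ _ (inv_ne_zero hp), inv_neg]

lemma powerMean_le_powerMean_of_one_le (ha : 0 ≤ a) (hb : 0 ≤ b) (hp : 1 ≤ p) (hpq : p ≤ q) :
    powerMean p a b ≤ powerMean q a b := by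
  have hp₀ : 0 < p := by linarith
  have hq₀ : 0 < q := by linarith
  have hconc := (concaveOn_rpow (A := A) (p := p / q) ⟨by positivity, (div_le_one hq₀).2 hpq⟩).2
    (rpow_nonneg (a := a) (y := q)) (rpow_nonneg (a := b) (y := q)) (by norm_num : (0 : ℝ) ≤ 2⁻¹)
    (by norm_num : (0 : ℝ) ≤ 2⁻¹) (by norm_num)
  beta_reduce at hconc
  rw [rpow_rpow_of_exponent_nonneg a q (p / q) hq₀.le (by positivity),
    rpow_rpow_of_exponent_nonneg b q (p / q) hq₀.le (by positivity), mul_div_cancel₀ _ hq₀.ne',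
    ← smul_add, ← smul_add] at hconc
  calc powerMean p a b ≤ (((2⁻¹ : ℝ) • (a ^ q + b ^ q)) ^ (p / q)) ^ p⁻¹ :=
        rpow_le_rpow ⟨by positivity, inv_le_one_of_one_le₀ hp⟩ hconc
    _ = powerMean q a b := by
        rw [rpow_rpow_of_exponent_nonneg _ _ _ (by positivity) (by positivity)
          (smul_nonneg (by norm_num) (add_nonneg CFC.rpow_nonneg CFC.rpow_nonneg)), powerMean]
        congr 1
        field_simp

lemma powerMean_le_powerMean_one (ha : 0 ≤ a) (hb : 0 ≤ b) (hp : 2⁻¹ ≤ p) (hp₁ : p ≤ 1) :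
    powerMean p a b ≤ powerMean 1 a b := by
  have hp₀ : 0 < p := by linarith
  have hconv := (convexOn_rpow (A := A) (p := p⁻¹) ⟨one_le_inv₀ hp₀ |>.2 hp₁, by
      rw [inv_le_comm₀ hp₀ two_pos]; exact hp⟩).2
    (rpow_nonneg (a := a) (y := p)) (rpow_nonneg (a := b) (y := p)) (by norm_num : (0 : ℝ) ≤ 2⁻¹)
    (by norm_num : (0 : ℝ) ≤ 2⁻¹) (by norm_num)
  beta_reduce at hconv
  rw [rpow_rpow_of_exponent_nonneg a p p⁻¹ hp₀.le (by positivity),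
    rpow_rpow_of_exponent_nonneg b p p⁻¹ hp₀.le (by positivity), mul_inv_cancel₀ hp₀.ne',
    rpow_one a, rpow_one b, ← smul_add, ← smul_add] at hconv
  rwa [powerMean_one ha hb]

lemma powerMean_neg_one_le_powerMean_one (ha : IsStrictlyPositive a) (hb : IsStrictlyPositive b) :
    powerMean (-1) a b ≤ powerMean 1 a b := by
  have h := CStarAlgebra.convexOn_ringInverse.2 ha.ringInverse hb.ringInverse
    (by norm_num : (0 : ℝ) ≤ 2⁻¹) (by norm_num : (0 : ℝ) ≤ 2⁻¹) (by norm_num)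
  rw [Ring.inverse_inverse ha.isUnit, Ring.inverse_inverse hb.isUnit, ← smul_add, ← smul_add] at h
  rwa [powerMean_neg ha hb one_ne_zero, powerMean_one ha.ringInverse.nonneg hb.ringInverse.nonneg,
    powerMean_one ha.nonneg hb.nonneg]

lemma powerMean_le_powerMean_of_ringInverse (ha : IsStrictlyPositive a) (hb : IsStrictlyPositive b)
    (hp : p ≠ 0) (hq : q ≠ 0)
    (h : powerMean (-q) (Ring.inverse a) (Ring.inverse b) ≤
      powerMean (-p) (Ring.inverse a) (Ring.inverse b)) :
    powerMean p a b ≤ powerMean q a b := by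
  rw [← neg_neg p, ← neg_neg q, powerMean_neg ha hb (neg_ne_zero.2 hp),
    powerMean_neg ha hb (neg_ne_zero.2 hq)]
  exact CStarAlgebra.ringInverse_le_ringInverse h
    (isStrictlyPositive_powerMean ha.ringInverse)

lemma powerMean_le_powerMean_of_le_neg_one (ha : IsStrictlyPositive a) (hb : IsStrictlyPositive b)
    (hq : q ≤ -1) (hpq : p ≤ q) : powerMean p a b ≤ powerMean q a b :=
  powerMean_le_powerMean_of_ringInverse ha hb (by linarith) (by linarith)
    (powerMean_le_powerMean_of_one_le ha.ringInverse.nonneg hb.ringInverse.nonneg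
      (by linarith) (by linarith))

theorem powerMean_le_powerMean_of_starCond (ha : IsStrictlyPositive a)
    (hb : IsStrictlyPositive b) (hpq : StarCond p q) : powerMean p a b ≤ powerMean q a b := by
  have ha' := ha.ringInverse
  have hb' := hb.ringInverse
  rcases hpq with rfl | ⟨hp, hpq⟩ | ⟨hpq, hq⟩ | ⟨hp, hq⟩ | ⟨hp, hp₁, hq⟩ | ⟨hp, hq₁, hq⟩
  · exact le_rfl
  · exact powerMean_le_powerMean_of_one_le ha.nonneg hb.nonneg hp hpq.le
  · exact powerMean_le_powerMean_of_le_neg_one ha hb hq hpq.le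
  · calc powerMean p a b ≤ powerMean (-1) a b :=
          powerMean_le_powerMean_of_le_neg_one ha hb le_rfl hp
      _ ≤ powerMean 1 a b := powerMean_neg_one_le_powerMean_one ha hb
      _ ≤ powerMean q a b := powerMean_le_powerMean_of_one_le ha.nonneg hb.nonneg le_rfl hq
  · exact (powerMean_le_powerMean_one ha.nonneg hb.nonneg (by linarith) hp₁.le).trans
      (powerMean_le_powerMean_of_one_le ha.nonneg hb.nonneg le_rfl hq)
  · refine powerMean_le_powerMean_of_ringInverse ha hb (by linarith) (by linarith) ?_
    exact (powerMean_le_powerMean_one ha'.nonneg hb'.nonneg (by linarith) (by linarith)).trans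
      (powerMean_le_powerMean_of_one_le ha'.nonneg hb'.nonneg le_rfl (by linarith))

end PowerMean

section Matrix

open scoped MatrixOrder Matrix.Norms.L2Operator

variable {n : Type*} [Fintype n] [DecidableEq n]

theorem Matrix.PosSemidef.rpowH_eq_rpow {A : Matrix n n ℂ} (hA : A.PosSemidef) (r : ℝ) :
    A.rpowH r = A ^ r := by
  rw [CFC.rpow_eq_cfc_real hA.nonneg, hA.isHermitian.cfc_eq, Matrix.rpowH, Matrix.cfcReal,
    dif_pos hA.isHermitian, Matrix.IsHermitian.cfc]
  rfl

theorem Matrix.rpowH_powerMean {A B : Matrix n n ℂ} (hA : A.PosSemidef) (hB : B.PosSemidef)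
    (p : ℝ) : ((2 : ℂ)⁻¹ • (A.rpowH p + B.rpowH p)).rpowH (1 / p) = powerMean p A B := by
  have hmean : (2 : ℂ)⁻¹ • (A ^ p + B ^ p) = (2⁻¹ : ℝ) • (A ^ p + B ^ p) := by
    rw [← Complex.coe_smul]
    norm_num
  have hmean_nonneg : 0 ≤ (2⁻¹ : ℝ) • (A ^ p + B ^ p) :=
    smul_nonneg (by norm_num) (add_nonneg CFC.rpow_nonneg CFC.rpow_nonneg)
  rw [hA.rpowH_eq_rpow, hB.rpowH_eq_rpow, hmean,
    (Matrix.nonneg_iff_posSemidef.1 hmean_nonneg).rpowH_eq_rpow, one_div, powerMean]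

end Matrix

theorem powerMean_matrix_inequality_general (n : ℕ) (p q : ℝ)
    (hpq : StarCond p q)
    (A B : Matrix (Fin n) (Fin n) ℂ) (hA : A.PosDef) (hB : B.PosDef) :
    (Matrix.rpowH ((2 : ℂ)⁻¹ • (Matrix.rpowH A q + Matrix.rpowH B q)) (1 / q) -
      Matrix.rpowH ((2 : ℂ)⁻¹ • (Matrix.rpowH A p + Matrix.rpowH B p)) (1 / p)).PosSemidef := by
  open scoped MatrixOrder Matrix.Norms.L2Operator in
  rw [Matrix.rpowH_powerMean hA.posSemidef hB.posSemidef,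
    Matrix.rpowH_powerMean hA.posSemidef hB.posSemidef, ← Matrix.le_iff]
  exact powerMean_le_powerMean_of_starCond hA.isStrictlyPositive hB.isStrictlyPositive hpq

/-- If `p, q` are nonzero reals satisfying condition (★), then for all `n × n` positive
definite complex matrices `A, B`, the power mean inequality
`((A^p + B^p)/2)^(1/p) ≤ ((A^q + B^q)/2)^(1/q)` holds (in the Loewner order). -/
theorem powerMean_matrix_inequality (n : ℕ) (p q : ℝ) (hp : p ≠ 0) (hq : q ≠ 0)
    (hpq : StarCond p q)
    (A B : Matrix (Fin n) (Fin n) ℂ) (hA : A.PosDef) (hB : B.PosDef) :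
    (Matrix.rpowH ((2 : ℂ)⁻¹ • (Matrix.rpowH A q + Matrix.rpowH B q)) (1 / q) -
      Matrix.rpowH ((2 : ℂ)⁻¹ • (Matrix.rpowH A p + Matrix.rpowH B p)) (1 / p)).PosSemidef :=
  powerMean_matrix_inequality_general n p q hpq A B hA hB
end

section
/- Let n ∈ ℕ and let Φ : M₂ → M_n be a unital positive linear map. Then for all nonzero real numbers p, q with p ≤ q and every 2×2 positive definite complex matrix A, one has Φ(A^p)^{1/p} ≤ Φ(A^q)^{1/q}. -/
open scoped ComplexOrder

/-!
Diagonalise `A = a • E + b • (1 - E)` with `E` a rank-one projection. Then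
`Φ (A ^ r) = a ^ r • X + b ^ r • (1 - X)` with `X = Φ E` and `0 ≤ X ≤ 1`, so by functional
calculus `Φ (A ^ r) ^ (1 / r) = g_r X` for the two-point power mean
`g_r t = (t a ^ r + (1 - t) b ^ r) ^ (1 / r)`. The claim thus reduces to the monotonicity of
weighted power means in the exponent, applied on the spectrum of `X`, which lies in `[0, 1]`.
-/

namespace Real

variable {ι : Type*} {s : Finset ι} {w z : ι → ℝ} {p q : ℝ}

lemma sum_mul_rpow_pos (hw : ∀ i ∈ s, 0 ≤ w i) (hw' : ∑ i ∈ s, w i = 1)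
    (hz : ∀ i ∈ s, 0 < z i) (r : ℝ) : 0 < ∑ i ∈ s, w i * z i ^ r :=
  (convex_Ioi (0 : ℝ)).sum_mem hw hw' fun i hi => rpow_pos_of_pos (hz i hi) r

lemma rpow_div_rpow_one_div {x : ℝ} (hx : 0 ≤ x) (hp : p ≠ 0) (hq : q ≠ 0) :
    (x ^ (q / p)) ^ (1 / q) = x ^ (1 / p) := by
  rw [← rpow_mul hx]
  congr 1
  field_simp

lemma geom_mean_rpow_le_sum_mul_rpow (hw : ∀ i ∈ s, 0 ≤ w i) (hw' : ∑ i ∈ s, w i = 1)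
    (hz : ∀ i ∈ s, 0 ≤ z i) (r : ℝ) :
    (∏ i ∈ s, z i ^ w i) ^ r ≤ ∑ i ∈ s, w i * z i ^ r := by
  calc (∏ i ∈ s, z i ^ w i) ^ r = ∏ i ∈ s, (z i ^ r) ^ w i := by
        rw [← finsetProd_rpow _ _ fun i hi => rpow_nonneg (hz i hi) _]
        refine Finset.prod_congr rfl fun i hi => ?_
        rw [← rpow_mul (hz i hi), ← rpow_mul (hz i hi), mul_comm]
    _ ≤ ∑ i ∈ s, w i * z i ^ r :=
        geom_mean_le_arith_mean_weighted s w _ hw hw' fun i hi => rpow_nonneg (hz i hi) r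

lemma rpow_mean_le_geom_mean (hw : ∀ i ∈ s, 0 ≤ w i) (hw' : ∑ i ∈ s, w i = 1)
    (hz : ∀ i ∈ s, 0 < z i) (hp : p < 0) :
    (∑ i ∈ s, w i * z i ^ p) ^ (1 / p) ≤ ∏ i ∈ s, z i ^ w i := by
  have hG : 0 < ∏ i ∈ s, z i ^ w i := Finset.prod_pos fun i hi => rpow_pos_of_pos (hz i hi) _
  calc (∑ i ∈ s, w i * z i ^ p) ^ (1 / p) ≤ ((∏ i ∈ s, z i ^ w i) ^ p) ^ (1 / p) :=
        rpow_le_rpow_of_nonpos (rpow_pos_of_pos hG p)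
          (geom_mean_rpow_le_sum_mul_rpow hw hw' (fun i hi => (hz i hi).le) p)
          (one_div_neg.mpr hp).le
    _ = ∏ i ∈ s, z i ^ w i := by rw [one_div, rpow_rpow_inv hG.le hp.ne]

lemma geom_mean_le_rpow_mean (hw : ∀ i ∈ s, 0 ≤ w i) (hw' : ∑ i ∈ s, w i = 1)
    (hz : ∀ i ∈ s, 0 ≤ z i) (hq : 0 < q) :
    ∏ i ∈ s, z i ^ w i ≤ (∑ i ∈ s, w i * z i ^ q) ^ (1 / q) := by
  have hG : 0 ≤ ∏ i ∈ s, z i ^ w i := Finset.prod_nonneg fun i hi => rpow_nonneg (hz i hi) _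
  calc ∏ i ∈ s, z i ^ w i = ((∏ i ∈ s, z i ^ w i) ^ q) ^ (1 / q) := by
        rw [one_div, rpow_rpow_inv hG hq.ne']
    _ ≤ (∑ i ∈ s, w i * z i ^ q) ^ (1 / q) :=
        rpow_le_rpow (rpow_nonneg hG q) (geom_mean_rpow_le_sum_mul_rpow hw hw' hz q)
          (one_div_pos.mpr hq).le

lemma rpow_mean_le_rpow_mean_of_pos (hw : ∀ i ∈ s, 0 ≤ w i) (hw' : ∑ i ∈ s, w i = 1)
    (hz : ∀ i ∈ s, 0 ≤ z i) (hp : 0 < p) (hpq : p ≤ q) :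
    (∑ i ∈ s, w i * z i ^ p) ^ (1 / p) ≤ (∑ i ∈ s, w i * z i ^ q) ^ (1 / q) := by
  have hq : 0 < q := hp.trans_le hpq
  have hzp : ∀ i ∈ s, 0 ≤ z i ^ p := fun i hi => rpow_nonneg (hz i hi) p
  have jensen : (∑ i ∈ s, w i * z i ^ p) ^ (q / p) ≤ ∑ i ∈ s, w i * z i ^ q := by
    convert rpow_arith_mean_le_arith_mean_rpow s w _ hw hw' hzp ((one_le_div hp).mpr hpq)
      using 3 with i hi
    rw [← rpow_mul (hz i hi), mul_div_cancel₀ _ hp.ne']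
  have hS : 0 ≤ ∑ i ∈ s, w i * z i ^ p :=
    Finset.sum_nonneg fun i hi => mul_nonneg (hw i hi) (hzp i hi)
  rw [← rpow_div_rpow_one_div hS hp.ne' hq.ne']
  exact rpow_le_rpow (rpow_nonneg hS _) jensen (one_div_pos.mpr hq).le

lemma rpow_mean_le_rpow_mean_of_neg (hw : ∀ i ∈ s, 0 ≤ w i) (hw' : ∑ i ∈ s, w i = 1)
    (hz : ∀ i ∈ s, 0 < z i) (hq : q < 0) (hpq : p ≤ q) :
    (∑ i ∈ s, w i * z i ^ p) ^ (1 / p) ≤ (∑ i ∈ s, w i * z i ^ q) ^ (1 / q) := by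
  have hp : p < 0 := hpq.trans_lt hq
  have jensen : ∑ i ∈ s, w i * z i ^ q ≤ (∑ i ∈ s, w i * z i ^ p) ^ (q / p) := by
    have h := (concaveOn_rpow (div_nonneg_of_nonpos hq.le hp.le)
      ((div_le_one_of_neg hp).mpr hpq)).le_map_sum (p := fun i => z i ^ p) hw hw'
      (fun i hi => Set.mem_Ici.mpr (rpow_nonneg (hz i hi).le p))
    simp only [smul_eq_mul] at h
    refine le_of_eq_of_le (Finset.sum_congr rfl fun i hi => ?_) h
    rw [← rpow_mul (hz i hi).le, mul_div_cancel₀ _ hp.ne]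
  rw [← rpow_div_rpow_one_div (sum_mul_rpow_pos hw hw' hz p).le hp.ne hq.ne]
  exact rpow_le_rpow_of_nonpos (sum_mul_rpow_pos hw hw' hz q) jensen (one_div_neg.mpr hq).le

theorem rpow_mean_le_rpow_mean (hw : ∀ i ∈ s, 0 ≤ w i) (hw' : ∑ i ∈ s, w i = 1)
    (hz : ∀ i ∈ s, 0 < z i) (hp : p ≠ 0) (hq : q ≠ 0) (hpq : p ≤ q) :
    (∑ i ∈ s, w i * z i ^ p) ^ (1 / p) ≤ (∑ i ∈ s, w i * z i ^ q) ^ (1 / q) := by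
  rcases hq.lt_or_gt with hq | hq
  · exact rpow_mean_le_rpow_mean_of_neg hw hw' hz hq hpq
  rcases hp.lt_or_gt with hp | hp
  · exact (rpow_mean_le_geom_mean hw hw' hz hp).trans
      (geom_mean_le_rpow_mean hw hw' (fun i hi => (hz i hi).le) hq)
  · exact rpow_mean_le_rpow_mean_of_pos hw hw' (fun i hi => (hz i hi).le) hp hpq

end Real

open scoped MatrixOrder

namespace Matrix

variable {m : Type*} [Fintype m] [DecidableEq m]

lemma IsHermitian.cfcReal_eq_cfc {A : Matrix m m ℂ} (hA : A.IsHermitian) (f : ℝ → ℝ) :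
    cfcReal f A = cfc f A := by
  rw [cfcReal, dif_pos hA, hA.cfc_eq, IsHermitian.cfc]
  rfl

lemma spectrum_subset_Icc_of_nonneg_of_le_one {X : Matrix m m ℂ} (h0 : 0 ≤ X) (h1 : X ≤ 1) :
    spectrum ℝ X ⊆ Set.Icc 0 1 := by
  intro x hx
  have h1X : 1 - x ∈ spectrum ℝ (1 - X) := by
    rw [← map_one (algebraMap ℝ (Matrix m m ℂ)), ← spectrum.singleton_sub_eq]
    exact Set.sub_mem_sub rfl hx
  exact ⟨spectrum_nonneg_of_nonneg h0 hx,
    sub_nonneg.mp (spectrum_nonneg_of_nonneg (sub_nonneg.mpr h1) h1X)⟩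

lemma IsHermitian.smul_add_smul_one_sub_eq_cfc {X : Matrix m m ℂ} (hX : X.IsHermitian)
    (c d : ℝ) :
    c • X + d • (1 - X) = cfc (fun t => t * c + (1 - t) * d) X := by
  have hX' : IsSelfAdjoint X := hX
  have hf : (fun t : ℝ => t * c + (1 - t) * d) = fun t => c • t + d • (1 - t) := by
    funext t; simp only [smul_eq_mul]; ring
  rw [hf, cfc_add .., cfc_smul .., cfc_smul .., cfc_sub .., cfc_id' .., cfc_const_one ..]

lemma IsHermitian.rpowH_smul_add_smul_one_sub {X : Matrix m m ℂ} (hX : X.IsHermitian)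
    (c d s : ℝ) :
    rpowH (c • X + d • (1 - X)) s = cfc (fun t => (t * c + (1 - t) * d) ^ s) X := by
  have hX' : IsSelfAdjoint X := hX
  have hY : (cfc (fun t => t * c + (1 - t) * d) X).IsHermitian := cfc_predicate _ _
  rw [hX.smul_add_smul_one_sub_eq_cfc, rpowH, hY.cfcReal_eq_cfc,
    ← cfc_comp' (hg := X.finite_real_spectrum.image _ |>.continuousOn _)
      (hf := X.finite_real_spectrum.continuousOn _)]

theorem rpowH_smul_add_smul_one_sub_mono {X : Matrix m m ℂ} (h0 : 0 ≤ X) (h1 : X ≤ 1)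
    {a b : ℝ} (ha : 0 < a) (hb : 0 < b) {p q : ℝ} (hp : p ≠ 0) (hq : q ≠ 0)
    (hpq : p ≤ q) :
    rpowH (a ^ p • X + b ^ p • (1 - X)) (1 / p) ≤
      rpowH (a ^ q • X + b ^ q • (1 - X)) (1 / q) := by
  have hX : X.IsHermitian := (nonneg_iff_posSemidef.mp h0).isHermitian
  have hX' : IsSelfAdjoint X := hX
  rw [hX.rpowH_smul_add_smul_one_sub, hX.rpowH_smul_add_smul_one_sub, ← sub_nonneg,
    ← cfc_sub (hf := X.finite_real_spectrum.continuousOn _)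
      (hg := X.finite_real_spectrum.continuousOn _)]
  refine cfc_nonneg fun t ht => sub_nonneg.mpr ?_
  obtain ⟨ht0, ht1⟩ := spectrum_subset_Icc_of_nonneg_of_le_one h0 h1 ht
  have hmean := Real.rpow_mean_le_rpow_mean (s := Finset.univ) (w := ![t, 1 - t])
    (z := ![a, b]) (by simp [Fin.forall_fin_two, ht0, ht1]) (by simp)
    (by simp [Fin.forall_fin_two, ha, hb]) hp hq hpq
  simpa only [Fin.sum_univ_two, cons_val_zero, cons_val_one] using hmean

lemma IsHermitian.exists_cfcReal_eq_fin_two {A : Matrix (Fin 2) (Fin 2) ℂ} (hA : A.IsHermitian) :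
    ∃ E : Matrix (Fin 2) (Fin 2) ℂ, 0 ≤ E ∧ E ≤ 1 ∧
      ∀ f : ℝ → ℝ,
        cfcReal f A = f (hA.eigenvalues 0) • E + f (hA.eigenvalues 1) • (1 - E) := by
  set U := Unitary.conjStarAlgAut ℂ (Matrix (Fin 2) (Fin 2) ℂ) hA.eigenvectorUnitary
  have hD : (1 : Matrix (Fin 2) (Fin 2) ℂ) - diagonal ![1, 0] = diagonal ![0, 1] := by
    rw [← diagonal_one, diagonal_sub]
    congr 1
    ext i
    fin_cases i <;> simp
  refine ⟨U (diagonal ![1, 0]), map_nonneg U (PosSemidef.diagonal ?_).nonneg, ?_, fun f => ?_⟩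
  · simp [Pi.le_def, Fin.forall_fin_two]
  · rw [← sub_nonneg, ← map_one U, ← map_sub, hD]
    exact map_nonneg U (PosSemidef.diagonal (by simp [Pi.le_def, Fin.forall_fin_two])).nonneg
  · rw [hA.cfcReal_eq_cfc, hA.cfc_eq, IsHermitian.cfc, ← map_one U, ← map_sub,
      ← LinearMapClass.map_smul_of_tower U, ← LinearMapClass.map_smul_of_tower U, ← map_add,
      hD]
    congr 1
    ext i j
    fin_cases i <;> fin_cases j <;> simp

end Matrix

/-- If `Φ : M₂ → Mₙ` is a unital positive linear map, then for all nonzero reals `p ≤ q`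
and every `2 × 2` positive definite complex matrix `A`, one has
`Φ(A^p)^(1/p) ≤ Φ(A^q)^(1/q)`. -/
theorem powerMean_unital_positive_map_M2 (n : ℕ)
    (Φ : Matrix (Fin 2) (Fin 2) ℂ →ₗ[ℂ] Matrix (Fin n) (Fin n) ℂ)
    (hΦ1 : Φ 1 = 1)
    (hΦpos : ∀ A : Matrix (Fin 2) (Fin 2) ℂ, A.PosSemidef → (Φ A).PosSemidef)
    (p q : ℝ) (hp : p ≠ 0) (hq : q ≠ 0) (hpq : p ≤ q)
    (A : Matrix (Fin 2) (Fin 2) ℂ) (hA : A.PosDef) :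
    (Matrix.rpowH (Φ (Matrix.rpowH A q)) (1 / q) -
      Matrix.rpowH (Φ (Matrix.rpowH A p)) (1 / p)).PosSemidef := by
  obtain ⟨E, hE0, hE1, hAE⟩ := hA.isHermitian.exists_cfcReal_eq_fin_two
  set a := hA.isHermitian.eigenvalues 0
  set b := hA.isHermitian.eigenvalues 1
  have hΦA : ∀ r : ℝ, Φ (A.rpowH r) = a ^ r • Φ E + b ^ r • (1 - Φ E) := by
    intro r
    rw [Matrix.rpowH, hAE, map_add, Φ.map_smul_of_tower, Φ.map_smul_of_tower, map_sub, hΦ1]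
  have hΦE0 : 0 ≤ Φ E := (hΦpos E (Matrix.nonneg_iff_posSemidef.mp hE0)).nonneg
  have hΦE1 : Φ E ≤ 1 := by
    rw [Matrix.le_iff, ← hΦ1, ← map_sub]
    exact hΦpos _ (Matrix.le_iff.mp hE1)
  rw [hΦA, hΦA, ← Matrix.le_iff]
  exact Matrix.rpowH_smul_add_smul_one_sub_mono hΦE0 hΦE1 (hA.eigenvalues_pos 0)
    (hA.eigenvalues_pos 1) hp hq hpq
end

section
/- Let H, K be complex Hilbert spaces, let Φ : B(H) → B(K) be a unital positive linear map, and let A ∈ B(H) be positive invertible. Then Φ(A^p)^{1/p} converges in the operator norm to exp(Φ(log A)) as p → 0 (p ≠ 0). -/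
/-!
Since `A ^ p = exp (p • log A)`, the curve `p ↦ Φ (A ^ p)` passes through `1` at `p = 0` with
derivative `Φ (log A)`; here it matters that positive maps are automatically bounded. Because
`log (1 + X) = X + O(‖X‖²)` for self-adjoint `X`, the curve `p ↦ log (Φ (A ^ p))` has the same
derivative at `0`, i.e. `p⁻¹ • log (Φ (A ^ p)) → Φ (log A)`. As `Φ (A ^ p)` is strictly positive,
`Φ (A ^ p) ^ (1 / p) = exp (p⁻¹ • log (Φ (A ^ p)))`, and continuity of `exp` concludes.
-/

open Filter NormedSpace Topology Asymptotics

lemma spectrum.abs_sub_one_le_norm_sub_one {A : Type*} [NormedRing A] [NormedAlgebra ℝ A]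
    [CompleteSpace A] [NormOneClass A] {a : A} {t : ℝ} (ht : t ∈ spectrum ℝ a) :
    |t - 1| ≤ ‖a - 1‖ := by
  have : t - 1 ∈ spectrum ℝ (a - 1) := by
    rw [← map_one (algebraMap ℝ A), ← spectrum.sub_singleton_eq]
    exact Set.sub_mem_sub ht rfl
  simpa using spectrum.norm_le_norm_of_mem this

lemma Real.abs_log_sub_sub_one_le {t : ℝ} (ht : |t - 1| ≤ 1 / 2) :
    |log t - (t - 1)| ≤ 2 * |t - 1| ^ 2 := by
  have h := Real.abs_log_sub_add_sum_range_le (x := 1 - t) (by rw [abs_sub_comm]; linarith) 1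
  simp only [Finset.sum_range_one, pow_one, Nat.cast_zero, zero_add, div_one,
    sub_sub_cancel, abs_sub_comm (1 : ℝ) t] at h
  calc |log t - (t - 1)| = |1 - t + log t| := by ring_nf
    _ ≤ |t - 1| ^ 2 / (1 - |t - 1|) := h
    _ ≤ |t - 1| ^ 2 / (1 / 2) := by gcongr; linarith
    _ = 2 * |t - 1| ^ 2 := by ring

namespace CFC

variable {A : Type*} [CStarAlgebra A]

lemma rpow_eq_exp_smul_log [PartialOrder A] [StarOrderedRing A] {a : A}
    (ha : IsStrictlyPositive a) (p : ℝ) : a ^ p = exp (p • log a) := by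
  have hspec : ∀ x ∈ spectrum ℝ a, x ≠ 0 := fun x hx => (ha.spectrum_pos hx).ne'
  rw [← real_exp_eq_normedSpace_exp, log, ← cfc_smul p Real.log a, ← cfc_comp' Real.exp _ a,
    rpow_eq_cfc_real ha.nonneg]
  exact cfc_congr fun x hx => by
    simp [Real.rpow_def_of_pos (ha.spectrum_pos hx), mul_comm]

lemma hasDerivAt_rpow_zero [PartialOrder A] [StarOrderedRing A] {a : A}
    (ha : IsStrictlyPositive a) : HasDerivAt (fun p : ℝ => a ^ p) (log a) 0 := by
  simpa [rpow_eq_exp_smul_log ha] using hasDerivAt_exp_smul_const (log a) (0 : ℝ)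

lemma norm_log_sub_sub_one_le {b : A} (hb : IsSelfAdjoint b) (h : ‖b - 1‖ ≤ 1 / 2) :
    ‖log b - (b - 1)‖ ≤ 2 * ‖b - 1‖ ^ 2 := by
  nontriviality A
  have hspec : ∀ t ∈ spectrum ℝ b, |t - 1| ≤ 1 / 2 := fun t ht =>
    (spectrum.abs_sub_one_le_norm_sub_one ht).trans h
  have hne : ∀ t ∈ spectrum ℝ b, t ≠ 0 := fun t ht => by
    have := abs_le.mp (hspec t ht); linarith
  have heq : log b - (b - 1) = cfc (fun t : ℝ => Real.log t - (t - 1)) b := by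
    rw [cfc_sub _ _ b, cfc_sub _ _ b, cfc_id' ℝ b, cfc_const_one ℝ b, log]
  rw [heq]
  refine norm_cfc_le (by positivity) fun t ht => ?_
  calc ‖Real.log t - (t - 1)‖ ≤ 2 * |t - 1| ^ 2 := Real.abs_log_sub_sub_one_le (hspec t ht)
    _ ≤ 2 * ‖b - 1‖ ^ 2 := by gcongr; exact spectrum.abs_sub_one_le_norm_sub_one ht

theorem _root_.HasDerivAt.cfcLog_of_eq_one {g : ℝ → A} {L : A} {x : ℝ} (hg : HasDerivAt g L x)
    (hx : g x = 1) (hsa : ∀ᶠ p in 𝓝 x, IsSelfAdjoint (g p)) :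
    HasDerivAt (fun p => log (g p)) L x := by
  have hO : (fun p => g p - 1) =O[𝓝 x] fun p => p - x := hx ▸ hg.isBigO_sub
  have hsmall : Tendsto (fun p => g p - 1) (𝓝 x) (𝓝 0) := by
    simpa [hx] using hg.continuousAt.tendsto.sub_const 1
  have hsq : (fun p => ‖g p - 1‖ ^ 2) =o[𝓝 x] fun p => p - x := by
    simpa [sq] using hO.norm_left.mul_isLittleO
      ((isLittleO_one_iff ℝ).mpr hsmall).norm_left
  have hlog : (fun p => log (g p) - (g p - 1)) =O[𝓝 x] fun p => ‖g p - 1‖ ^ 2 := by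
    refine IsBigO.of_bound 2 ?_
    filter_upwards [hsa,
      (tendsto_zero_iff_norm_tendsto_zero.mp hsmall).eventually (ge_mem_nhds one_half_pos)]
      with p hp hp'
    simpa using norm_log_sub_sub_one_le hp (by simpa using hp')
  rw [hasDerivAt_iff_isLittleO] at hg ⊢
  refine ((hlog.trans_isLittleO hsq).add hg).congr_left fun p => ?_
  simp only [hx, log_one]
  abel

end CFC

lemma PositiveLinearMap.isStrictlyPositive_map {A B : Type*} [CStarAlgebra A] [PartialOrder A]
    [StarOrderedRing A] [CStarAlgebra B] [PartialOrder B] [StarOrderedRing B]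
    (Φ : A →ₚ[ℂ] B) (hΦ1 : Φ 1 = 1) {a : A} (ha : IsStrictlyPositive a) :
    IsStrictlyPositive (Φ a) := by
  rcases subsingleton_or_nontrivial A with hA | hA
  · rw [Subsingleton.elim a 1, hΦ1]
    exact isStrictlyPositive_one
  obtain ⟨r, hr, hra⟩ := (CFC.exists_pos_algebraMap_le_iff ha.isSelfAdjoint).mpr
    fun x hx => ha.spectrum_pos hx
  refine (isStrictlyPositive_algebraMap (A := B) hr).of_le ?_
  calc algebraMap ℝ B r = Φ (algebraMap ℝ A r) := by
        simp only [Algebra.algebraMap_eq_smul_one, Φ.map_smul_of_tower, hΦ1]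
    _ ≤ Φ a := OrderHomClass.mono Φ hra

/-- If `Φ : B(H) → B(K)` is a unital positive linear map and `A ∈ B(H)` is positive
invertible, then `Φ(A^p)^(1/p)` converges in operator norm to `exp(Φ(log A))` as `p → 0`
through nonzero values. -/
theorem tendsto_powerMean_exp_log
    {H K : Type*} [NormedAddCommGroup H] [InnerProductSpace ℂ H] [CompleteSpace H]
    [NormedAddCommGroup K] [InnerProductSpace ℂ K] [CompleteSpace K]
    (Φ : (H →L[ℂ] H) →ₗ[ℂ] (K →L[ℂ] K))
    (hΦpos : ∀ T : H →L[ℂ] H, 0 ≤ T → 0 ≤ Φ T)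
    (hΦ1 : Φ 1 = 1)
    (A : H →L[ℂ] H) (hA : 0 ≤ A) (hAinv : IsUnit A) :
    Filter.Tendsto (fun p : ℝ => (Φ (A ^ p)) ^ (1 / p))
      (nhdsWithin (0 : ℝ) {0}ᶜ)
      (nhds (NormedSpace.exp (Φ (CFC.log A)))) := by
  set Ψ := PositiveLinearMap.mk₀ Φ hΦpos
  have hA' : IsStrictlyPositive A := hAinv.isStrictlyPositive hA
  have hΦA (p : ℝ) : IsStrictlyPositive (Φ (A ^ p)) :=
    Ψ.isStrictlyPositive_map hΦ1 (IsStrictlyPositive.rpow A p hA')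
  have hΦc : Continuous Φ := map_continuous Ψ
  have hderiv : HasDerivAt (fun p : ℝ => Φ (A ^ p)) (Φ (CFC.log A)) 0 :=
    ((ContinuousLinearMap.mk Φ hΦc).restrictScalars ℝ).hasFDerivAt.comp_hasDerivAt 0
      (CFC.hasDerivAt_rpow_zero hA')
  have hlog := (hderiv.cfcLog_of_eq_one (by simp [CFC.rpow_zero A hA, hΦ1])
    (.of_forall fun p => (hΦA p).isSelfAdjoint)).tendsto_slope_zero
  simp only [zero_add, CFC.rpow_zero A hA, hΦ1, CFC.log_one, sub_zero] at hlog
  refine ((exp_analytic (𝕂 := ℂ) _).continuousAt.tendsto.comp hlog).congr fun p => ?_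
  simp [CFC.rpow_eq_exp_smul_log (hΦA p), one_div]
end

section
/- Let n ∈ ℕ and let p, q be nonzero real numbers. Then the power mean inequality ((A^p + B^p)/2)^{1/p} ≤ ((A^q + B^q)/2)^{1/q} holds for every pair of n×n positive definite complex matrices A, B if and only if the power mean inequality ((A^{−q} + B^{−q})/2)^{−1/q} ≤ ((A^{−p} + B^{−p})/2)^{−1/p} holds for every pair of n×n positive definite complex matrices A, B. -/
open scoped ComplexOrder

/-!
Write `M_p` for the `p`-power mean. Since `(A⁻¹) ^ p = A ^ (-p)` and
`M ^ (-(1 / p)) = (M ^ (1 / p))⁻¹`, we have `M_{-p}(A, B) = M_p(A⁻¹, B⁻¹)⁻¹`. Inversion reverses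
the order on positive definite matrices, so `M_p ≤ M_q` for all pairs gives `M_{-q} ≤ M_{-p}` for
all pairs; applied to `(-q, -p)` the same argument gives the converse.
-/

open scoped MatrixOrder

namespace Matrix

variable {m : Type*} [Fintype m] [DecidableEq m] {A B : Matrix m m ℂ}

theorem PosDef.rpowH_eq_rpow (hA : A.PosDef) (r : ℝ) : A.rpowH r = A ^ r := by
  rw [CFC.rpow_eq_cfc_real hA.posSemidef.nonneg, hA.1.cfc_eq, rpowH, cfcReal, dif_pos hA.1]
  rfl

theorem PosDef.rpowH (hA : A.PosDef) (r : ℝ) : (A.rpowH r).PosDef := by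
  rw [hA.rpowH_eq_rpow]
  exact isStrictlyPositive_iff_posDef.mp (hA.isStrictlyPositive.rpow A r)

theorem PosDef.rpowH_neg (hA : A.PosDef) (r : ℝ) : A.rpowH (-r) = (A.rpowH r)⁻¹ := by
  rw [hA.rpowH_eq_rpow, hA.rpowH_eq_rpow]
  exact (inv_eq_right_inv (CFC.rpow_mul_rpow_neg r hA.isStrictlyPositive)).symm

theorem PosDef.inv_rpowH (hA : A.PosDef) (r : ℝ) : A⁻¹.rpowH r = A.rpowH (-r) := by
  rw [hA.inv.rpowH_eq_rpow, hA.rpowH_eq_rpow, nonsing_inv_eq_ringInverse,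
    CFC.inverse_eq_rpow_neg_one hA.isStrictlyPositive,
    CFC.rpow_rpow A _ _ (by norm_num) hA.isStrictlyPositive, neg_one_mul]

theorem PosDef.inv_le_inv (hA : A.PosDef) (hAB : A ≤ B) : B⁻¹ ≤ A⁻¹ := by
  -- with the operator norm, square matrices form a C⋆-algebra
  open scoped Matrix.Norms.L2Operator in
  simpa only [nonsing_inv_eq_ringInverse] using
    CStarAlgebra.ringInverse_le_ringInverse hAB hA.isStrictlyPositive

noncomputable def powerMean (p : ℝ) (A B : Matrix m m ℂ) : Matrix m m ℂ :=
  ((2 : ℂ)⁻¹ • (A.rpowH p + B.rpowH p)).rpowH (1 / p)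

theorem PosDef.half_smul_rpowH_add (hA : A.PosDef) (hB : B.PosDef) (p : ℝ) :
    ((2 : ℂ)⁻¹ • (A.rpowH p + B.rpowH p)).PosDef :=
  ((hA.rpowH p).add (hB.rpowH p)).smul (by norm_num)

theorem PosDef.powerMean (hA : A.PosDef) (hB : B.PosDef) (p : ℝ) : (powerMean p A B).PosDef :=
  (hA.half_smul_rpowH_add hB p).rpowH _

theorem PosDef.powerMean_neg (hA : A.PosDef) (hB : B.PosDef) (p : ℝ) :
    Matrix.powerMean (-p) A B = (Matrix.powerMean p A⁻¹ B⁻¹)⁻¹ := by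
  rw [Matrix.powerMean, Matrix.powerMean, hA.inv_rpowH, hB.inv_rpowH, div_neg,
    (hA.half_smul_rpowH_add hB (-p)).rpowH_neg]

theorem powerMean_neg_le_of_forall_le {p q : ℝ}
    (h : ∀ A B : Matrix m m ℂ, A.PosDef → B.PosDef → powerMean p A B ≤ powerMean q A B)
    (hA : A.PosDef) (hB : B.PosDef) : powerMean (-q) A B ≤ powerMean (-p) A B := by
  rw [hA.powerMean_neg hB, hA.powerMean_neg hB]
  exact (hA.inv.powerMean hB.inv p).inv_le_inv (h _ _ hA.inv hB.inv)

theorem forall_powerMean_le_iff_neg (p q : ℝ) :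
    (∀ A B : Matrix m m ℂ, A.PosDef → B.PosDef → powerMean p A B ≤ powerMean q A B) ↔
      ∀ A B : Matrix m m ℂ, A.PosDef → B.PosDef → powerMean (-q) A B ≤ powerMean (-p) A B :=
  ⟨fun h _ _ => powerMean_neg_le_of_forall_le h, fun h A B hA hB => by
    simpa only [neg_neg] using powerMean_neg_le_of_forall_le h hA hB⟩

end Matrix

theorem powerMean_inequality_iff_inverse_general (n : ℕ) (p q : ℝ) :
    (∀ A B : Matrix (Fin n) (Fin n) ℂ, A.PosDef → B.PosDef →
      (Matrix.rpowH ((2 : ℂ)⁻¹ • (Matrix.rpowH A q + Matrix.rpowH B q)) (1 / q) -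
        Matrix.rpowH ((2 : ℂ)⁻¹ • (Matrix.rpowH A p + Matrix.rpowH B p)) (1 / p)).PosSemidef) ↔
    (∀ A B : Matrix (Fin n) (Fin n) ℂ, A.PosDef → B.PosDef →
      (Matrix.rpowH ((2 : ℂ)⁻¹ • (Matrix.rpowH A (-p) + Matrix.rpowH B (-p))) (-(1 / p)) -
        Matrix.rpowH ((2 : ℂ)⁻¹ • (Matrix.rpowH A (-q) + Matrix.rpowH B (-q))) (-(1 / q))).PosSemidef) := by
  simpa only [Matrix.le_iff, Matrix.powerMean, div_neg] using Matrix.forall_powerMean_le_iff_neg p q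

/-- For nonzero reals `p, q` and `n ∈ ℕ`, the power mean inequality
`((A^p + B^p)/2)^(1/p) ≤ ((A^q + B^q)/2)^(1/q)` holds for all positive definite `A, B ∈ Pₙ`
if and only if `((A^(-q) + B^(-q))/2)^(-1/q) ≤ ((A^(-p) + B^(-p))/2)^(-1/p)` holds for all
positive definite `A, B ∈ Pₙ`. -/
theorem powerMean_inequality_iff_inverse (n : ℕ) (p q : ℝ) (hp : p ≠ 0) (hq : q ≠ 0) :
    (∀ A B : Matrix (Fin n) (Fin n) ℂ, A.PosDef → B.PosDef →
      (Matrix.rpowH ((2 : ℂ)⁻¹ • (Matrix.rpowH A q + Matrix.rpowH B q)) (1 / q) -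
        Matrix.rpowH ((2 : ℂ)⁻¹ • (Matrix.rpowH A p + Matrix.rpowH B p)) (1 / p)).PosSemidef) ↔
    (∀ A B : Matrix (Fin n) (Fin n) ℂ, A.PosDef → B.PosDef →
      (Matrix.rpowH ((2 : ℂ)⁻¹ • (Matrix.rpowH A (-p) + Matrix.rpowH B (-p))) (-(1 / p)) -
        Matrix.rpowH ((2 : ℂ)⁻¹ • (Matrix.rpowH A (-q) + Matrix.rpowH B (-q))) (-(1 / q))).PosSemidef) :=
  powerMean_inequality_iff_inverse_general n p q
end

section
/- For θ ∈ ℝ, let A = diag(2, 0) and B_θ be the 2×2 matrix with entries (B_θ)₁₁ = cos²θ, (B_θ)₁₂ = (B_θ)₂₁ = cos θ sin θ, (B_θ)₂₂ = sin²θ (a rank-one orthogonal projection). Then for every p, q ∈ (0, 1), det( ((A^q + B_θ^q)/2)^{1/q} − ((A^p + B_θ^p)/2)^{1/p} ) = −θ²·((2^p+1)/2)^{1/p}·((2^q+1)/2)^{1/q}·( 1/(2^p+1) − 1/(2^q+1) )² + o(θ²) as θ → 0. -/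
open scoped ComplexOrder

/-! Every `2 × 2` Hermitian matrix `M` has at most two eigenvalues, so `f(M) = a M + b` where
`t ↦ a t + b` is the secant of `f` through them. With `A = diag(2, 0)`, `A^r = 2^(r-1) A` and
`B_θ^r = B_θ`, this gives `((A^r + B_θ^r)/2)^(1/r) = x_r A + y_r B_θ + z_r` with `x_r`, `y_r`
multiples of the secant slope `a_r` and `z_r` its intercept, and
`det (x A + y B_θ + z) = z (2x + y + z) + 2xy sin²θ`.
As `θ → 0` the small eigenvalue `λ_r` of `(A^r + B_θ^r)/2` is `2^r θ² / (4 T_r) + o(θ²)`, where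
`T_r = (2^r + 1)/2` is the trace, so `a_r → T_r^(1/r) / T_r`; and since `1/r > 1`,
`z_r = λ_r^(1/r) - a_r λ_r = -a_r λ_r + o(θ²)`. Hence `z_q - z_p = O(θ²)`, and the coefficient
of `θ²` in the determinant is read off from the limits of `x`, `y` and `(z_q - z_p)/θ²`. -/

open Matrix Filter Topology Asymptotics

theorem Matrix.cfcReal_eq_cfc {n : Type*} [Fintype n] [DecidableEq n] {A : Matrix n n ℂ}
    (hA : A.IsHermitian) (f : ℝ → ℝ) : cfcReal f A = cfc f A := by
  rw [cfcReal, dif_pos hA, hA.cfc_eq]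
  rfl

theorem cfc_eq_smul_add_algebraMap_of_eqOn {A : Type*} {p : A → Prop} [TopologicalSpace A] [Ring A]
    [StarRing A] [Algebra ℝ A] [ContinuousFunctionalCalculus ℝ A p] {f : ℝ → ℝ} {a : A}
    {α β : ℝ} (ha : p a) (hf : Set.EqOn f (fun x => α * x + β) (spectrum ℝ a)) :
    cfc f a = α • a + algebraMap ℝ A β := by
  rw [cfc_congr hf, cfc_add a (fun x => α * x) (fun _ => β), cfc_const_mul α (fun x => x) a,
    cfc_id' ℝ a, cfc_const β a]

theorem Matrix.IsHermitian.eigenvalues_eq_or_eq_of_fin_two {𝕜 : Type*} [RCLike 𝕜]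
    {A : Matrix (Fin 2) (Fin 2) 𝕜} (hA : A.IsHermitian) {u v : ℝ}
    (htr : A.trace = u + v) (hdet : A.det = u * v) (i : Fin 2) :
    hA.eigenvalues i = u ∨ hA.eigenvalues i = v := by
  rw [hA.trace_eq_sum_eigenvalues, Fin.sum_univ_two] at htr
  rw [hA.det_eq_prod_eigenvalues, Fin.prod_univ_two] at hdet
  have hroot : ((hA.eigenvalues i - u) * (hA.eigenvalues i - v) : 𝕜) = 0 := by
    have h : ((hA.eigenvalues i - hA.eigenvalues 0) * (hA.eigenvalues i - hA.eigenvalues 1) : 𝕜)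
        = 0 := by
      fin_cases i <;> simp
    linear_combination h + (hA.eigenvalues i : 𝕜) * htr - hdet
  exact_mod_cast (mul_eq_zero.mp hroot).imp sub_eq_zero.mp sub_eq_zero.mp

theorem Matrix.IsHermitian.cfc_fin_two_eq_slope {𝕜 : Type*} [RCLike 𝕜]
    {A : Matrix (Fin 2) (Fin 2) 𝕜} (hA : A.IsHermitian) (f : ℝ → ℝ) {u v : ℝ}
    (htr : A.trace = u + v) (hdet : A.det = u * v) :
    cfc f A = slope f u v • A + algebraMap ℝ _ (f u - slope f u v * u) := by
  refine cfc_eq_smul_add_algebraMap_of_eqOn hA fun x hx => ?_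
  obtain ⟨i, rfl⟩ := hA.spectrum_real_eq_range_eigenvalues ▸ hx
  rcases hA.eigenvalues_eq_or_eq_of_fin_two htr hdet i with h | h <;> rw [h]
  · ring
  · have hslope := sub_smul_slope f u v
    rw [vsub_eq_sub, smul_eq_mul] at hslope
    linear_combination -hslope

-- Reducible, so that lemmas about `lineProj θ` rewrite the literal matrix of the theorem.
noncomputable abbrev lineProj (θ : ℝ) : Matrix (Fin 2) (Fin 2) ℂ :=
  !![((Real.cos θ) ^ 2 : ℂ), (Real.cos θ * Real.sin θ : ℂ);
    (Real.cos θ * Real.sin θ : ℂ), ((Real.sin θ) ^ 2 : ℂ)]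

theorem isHermitian_lineProj (θ : ℝ) : (lineProj θ).IsHermitian := by
  ext i j
  fin_cases i <;> fin_cases j <;>
    simp [conjTranspose_apply, -Complex.ofReal_cos, -Complex.ofReal_sin]

theorem isHermitian_diagonal_two_zero : (diagonal ![(2 : ℂ), 0]).IsHermitian :=
  isHermitian_diagonal_of_self_adjoint _ <| by
    ext i
    fin_cases i <;> simp

theorem rpowH_diagonal_two_zero {r : ℝ} (hr : r ≠ 0) :
    rpowH (diagonal ![(2 : ℂ), 0]) r = (2 ^ r / 2 : ℝ) • diagonal ![(2 : ℂ), 0] := by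
  rw [rpowH, cfcReal_eq_cfc isHermitian_diagonal_two_zero,
    isHermitian_diagonal_two_zero.cfc_fin_two_eq_slope _ (u := 0) (v := 2) (by simp) (by simp)]
  simp [slope_def_field, Real.zero_rpow hr]

theorem rpowH_lineProj {r : ℝ} (hr : r ≠ 0) (θ : ℝ) : rpowH (lineProj θ) r = lineProj θ := by
  rw [rpowH, cfcReal_eq_cfc (isHermitian_lineProj θ),
    (isHermitian_lineProj θ).cfc_fin_two_eq_slope _ (u := 0) (v := 1)
      (by simp [trace_fin_two]) (by rw [det_fin_two_of]; push_cast; ring)]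
  simp [slope_def_field, Real.zero_rpow hr]

/- `meanTrace r` and `meanEigMin r θ ≤ meanEigMax r θ` are the trace and the eigenvalues of
`(A^r + B_θ^r)/2`, whose determinant is `2^r sin²θ / 4`; `rootSlope` and `rootIntercept` give the
secant of `t ↦ t^(1/r)` through these eigenvalues. -/
noncomputable def meanTrace (r : ℝ) : ℝ := (2 ^ r + 1) / 2

noncomputable def meanDisc (r θ : ℝ) : ℝ := √(meanTrace r ^ 2 - 2 ^ r * Real.sin θ ^ 2)

noncomputable def meanEigMax (r θ : ℝ) : ℝ := (meanTrace r + meanDisc r θ) / 2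

noncomputable def meanEigMin (r θ : ℝ) : ℝ := (meanTrace r - meanDisc r θ) / 2

noncomputable def rootSlope (r θ : ℝ) : ℝ :=
  slope (fun t => t ^ (1 / r)) (meanEigMin r θ) (meanEigMax r θ)

noncomputable def rootIntercept (r θ : ℝ) : ℝ :=
  meanEigMin r θ ^ (1 / r) - rootSlope r θ * meanEigMin r θ

section MeanEigenvalues

variable (r θ : ℝ)

theorem meanTrace_pos : 0 < meanTrace r := by
  unfold meanTrace
  positivity

theorem meanDisc_sq : meanDisc r θ ^ 2 = meanTrace r ^ 2 - 2 ^ r * Real.sin θ ^ 2 := by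
  refine Real.sq_sqrt ?_
  have : 0 < (2 : ℝ) ^ r := by positivity
  unfold meanTrace
  nlinarith [mul_le_mul_of_nonneg_left (Real.sin_sq_le_one θ) this.le, sq_nonneg ((2 : ℝ) ^ r - 1)]

theorem meanDisc_le_meanTrace : meanDisc r θ ≤ meanTrace r := by
  refine Real.sqrt_le_iff.mpr ⟨(meanTrace_pos r).le, ?_⟩
  have : 0 < (2 : ℝ) ^ r := by positivity
  nlinarith [sq_nonneg (Real.sin θ)]

theorem meanEigMax_pos : 0 < meanEigMax r θ := by
  unfold meanEigMax meanDisc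
  linarith [meanTrace_pos r, Real.sqrt_nonneg (meanTrace r ^ 2 - 2 ^ r * Real.sin θ ^ 2)]

theorem meanEigMin_nonneg : 0 ≤ meanEigMin r θ := by
  unfold meanEigMin
  linarith [meanDisc_le_meanTrace r θ]

theorem meanEigMin_add_meanEigMax : meanEigMin r θ + meanEigMax r θ = meanTrace r := by
  unfold meanEigMin meanEigMax
  ring

theorem meanEigMin_mul_meanEigMax :
    meanEigMin r θ * meanEigMax r θ = 2 ^ r * Real.sin θ ^ 2 / 4 := by
  unfold meanEigMin meanEigMax
  linear_combination (-1 / 4 : ℝ) * meanDisc_sq r θ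

end MeanEigenvalues

theorem rpowH_powerMean {r : ℝ} (hr : r ≠ 0) (θ : ℝ) :
    rpowH ((2 : ℂ)⁻¹ • (rpowH (diagonal ![(2 : ℂ), 0]) r + rpowH (lineProj θ) r)) (1 / r) =
      (rootSlope r θ * 2 ^ r / 4) • diagonal ![(2 : ℂ), 0] + (rootSlope r θ / 2) • lineProj θ +
        rootIntercept r θ • 1 := by
  have hM : ((2 : ℂ)⁻¹ • ((2 ^ r / 2 : ℝ) • diagonal ![(2 : ℂ), 0] + lineProj θ)).IsHermitian :=
    ((isHermitian_diagonal_two_zero.smul (.all _)).add (isHermitian_lineProj θ)).smul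
      (by simp [IsSelfAdjoint])
  rw [rpowH_diagonal_two_zero hr, rpowH_lineProj hr, rpowH, cfcReal_eq_cfc hM,
    hM.cfc_fin_two_eq_slope _ (u := meanEigMin r θ) (v := meanEigMax r θ) ?_ ?_]
  · rw [Algebra.algebraMap_eq_smul_one, ← rootSlope, ← rootIntercept]
    module
  · rw [← RCLike.ofReal_add, meanEigMin_add_meanEigMax]
    simp only [trace_fin_two, meanTrace, Matrix.smul_apply, Matrix.add_apply, diagonal_apply_eq,
      of_apply, cons_val', cons_val_zero, cons_val_one, cons_val_fin_one, smul_eq_mul,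
      Complex.real_smul]
    push_cast
    linear_combination (2⁻¹ : ℂ) * Complex.cos_sq_add_sin_sq (θ : ℂ)
  · rw [← RCLike.ofReal_mul, meanEigMin_mul_meanEigMax]
    simp only [det_fin_two, Matrix.smul_apply, Matrix.add_apply, diagonal_apply_eq, of_apply,
      diagonal_apply_ne _ zero_ne_one, diagonal_apply_ne _ one_ne_zero, cons_val', cons_val_zero,
      cons_val_one, cons_val_fin_one, smul_eq_mul, Complex.real_smul]
    push_cast [Complex.coe_algebraMap]
    ring

theorem tendsto_sin_div_self : Tendsto (fun x => Real.sin x / x) (𝓝[≠] 0) (𝓝 1) := by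
  have h := (Real.continuous_sinc.tendsto 0).mono_left (nhdsWithin_le_nhds (s := {0}ᶜ))
  rw [Real.sinc_zero] at h
  refine h.congr' ?_
  filter_upwards [self_mem_nhdsWithin] with x hx
  exact Real.sinc_of_ne_zero hx

theorem meanDisc_zero (r : ℝ) : meanDisc r 0 = meanTrace r := by
  simp [meanDisc, Real.sqrt_sq (meanTrace_pos r).le]

theorem meanEigMin_zero (r : ℝ) : meanEigMin r 0 = 0 := by
  simp [meanEigMin, meanDisc_zero]

theorem continuous_meanDisc (r : ℝ) : Continuous (meanDisc r) := by
  unfold meanDisc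
  fun_prop

theorem tendsto_meanEigMax (r : ℝ) : Tendsto (meanEigMax r) (𝓝 0) (𝓝 (meanTrace r)) :=
  ((continuous_const.add (continuous_meanDisc r)).div_const 2).tendsto' 0 _ <| by
    simp [meanDisc_zero]

theorem tendsto_meanEigMin (r : ℝ) : Tendsto (meanEigMin r) (𝓝 0) (𝓝 0) :=
  ((continuous_const.sub (continuous_meanDisc r)).div_const 2).tendsto' 0 _ (meanEigMin_zero r)

theorem tendsto_meanEigMin_div_sq (r : ℝ) :
    Tendsto (fun θ => meanEigMin r θ / θ ^ 2) (𝓝[≠] 0) (𝓝 (2 ^ r / (4 * meanTrace r))) := by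
  have h : Tendsto (fun θ => 2 ^ r / 4 * (Real.sin θ / θ) ^ 2 / meanEigMax r θ) (𝓝[≠] 0)
      (𝓝 (2 ^ r / 4 * 1 ^ 2 / meanTrace r)) :=
    ((tendsto_sin_div_self.pow 2).const_mul _).div
      ((tendsto_meanEigMax r).mono_left nhdsWithin_le_nhds) (meanTrace_pos r).ne'
  rw [one_pow, mul_one, div_div] at h
  refine h.congr fun θ => ?_
  rw [eq_div_of_mul_eq (meanEigMax_pos r θ).ne' (meanEigMin_mul_meanEigMax r θ)]
  ring

theorem tendsto_rootSlope {r : ℝ} (hr : 0 < r) :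
    Tendsto (rootSlope r) (𝓝 0) (𝓝 (meanTrace r ^ (1 / r) / meanTrace r)) := by
  have h := (((tendsto_meanEigMax r).rpow_const (p := 1 / r) (.inl (meanTrace_pos r).ne')).sub
    ((tendsto_meanEigMin r).rpow_const_nhds_zero (one_div_pos.mpr hr))).div
      ((tendsto_meanEigMax r).sub (tendsto_meanEigMin r)) (by simpa using (meanTrace_pos r).ne')
  rw [sub_zero, sub_zero] at h
  exact h.congr fun θ => (slope_def_field _ _ _).symm

theorem rootIntercept_zero {r : ℝ} (hr : r ≠ 0) : rootIntercept r 0 = 0 := by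
  simp [rootIntercept, meanEigMin_zero, hr]

theorem tendsto_rootIntercept_div_sq {r : ℝ} (hr0 : 0 < r) (hr1 : r < 1) :
    Tendsto (fun θ => rootIntercept r θ / θ ^ 2) (𝓝[≠] 0)
      (𝓝 (-(meanTrace r ^ (1 / r) / meanTrace r * (2 ^ r / (4 * meanTrace r))))) := by
  have hexp : 0 < 1 / r - 1 := by linarith [one_lt_one_div hr0 hr1]
  have h : Tendsto (fun θ => (meanEigMin r θ ^ (1 / r - 1) - rootSlope r θ) *
      (meanEigMin r θ / θ ^ 2)) (𝓝[≠] 0)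
      (𝓝 ((0 - meanTrace r ^ (1 / r) / meanTrace r) * (2 ^ r / (4 * meanTrace r)))) :=
    ((((tendsto_meanEigMin r).rpow_const_nhds_zero hexp).sub (tendsto_rootSlope hr0)).mono_left
      nhdsWithin_le_nhds).mul (tendsto_meanEigMin_div_sq r)
  rw [zero_sub, neg_mul] at h
  refine h.congr fun θ => ?_
  rw [rootIntercept, ← sub_add_cancel (1 / r) 1,
    Real.rpow_add_one' (meanEigMin_nonneg r θ) (by simp [hr0.ne']), add_sub_cancel_right]
  ring

theorem isLittleO_sq_of_tendsto_div_sq {f : ℝ → ℝ} {L : ℝ} (h0 : f 0 = 0)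
    (h : Tendsto (fun x => f x / x ^ 2) (𝓝[≠] 0) (𝓝 L)) :
    (fun x => f x - L * x ^ 2) =o[𝓝 0] (fun x => x ^ 2) := by
  rw [← nhdsNE_sup_pure, isLittleO_sup, isLittleO_pure]
  refine ⟨?_, by simp [h0]⟩
  rw [isLittleO_iff_tendsto' (by filter_upwards [self_mem_nhdsWithin] with x hx h; simp_all)]
  have h' := h.sub_const L
  rw [sub_self] at h'
  refine h'.congr' ?_
  filter_upwards [self_mem_nhdsWithin] with x (hx : x ≠ 0)
  field_simp

theorem det_smul_diagonal_add_smul_lineProj_add_smul_one (x y z θ : ℝ) :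
    det (x • diagonal ![(2 : ℂ), 0] + y • lineProj θ + z • 1) =
      ((z * (2 * x + y + z) + 2 * x * y * Real.sin θ ^ 2 : ℝ) : ℂ) := by
  rw [det_fin_two]
  simp only [Matrix.smul_apply, Matrix.add_apply, diagonal_apply_eq, one_apply_eq, of_apply,
    diagonal_apply_ne _ zero_ne_one, diagonal_apply_ne _ one_ne_zero, one_apply_ne zero_ne_one,
    one_apply_ne one_ne_zero, cons_val', cons_val_zero, cons_val_one, cons_val_fin_one,
    Complex.real_smul]
  push_cast
  linear_combination (y * z : ℂ) * Complex.cos_sq_add_sin_sq (θ : ℂ)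

theorem isLittleO_det_smul_diagonal_add_smul_lineProj_add_smul_one {x y z : ℝ → ℝ} {X Y Z : ℝ}
    (hx : Tendsto x (𝓝[≠] 0) (𝓝 X)) (hy : Tendsto y (𝓝[≠] 0) (𝓝 Y))
    (hz : Tendsto (fun θ => z θ / θ ^ 2) (𝓝[≠] 0) (𝓝 Z)) (hz0 : z 0 = 0) :
    (fun θ : ℝ => det (x θ • diagonal ![(2 : ℂ), 0] + y θ • lineProj θ + z θ • 1) -
        ((Z * (2 * X + Y) + 2 * X * Y : ℝ) : ℂ) * (θ : ℂ) ^ 2) =o[𝓝 0] (fun θ => θ ^ 2) := by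
  have hsq : Tendsto (fun θ : ℝ => θ ^ 2) (𝓝[≠] 0) (𝓝 0) :=
    ((continuous_pow 2).tendsto' 0 0 (by simp)).mono_left nhdsWithin_le_nhds
  have hz' : Tendsto z (𝓝[≠] 0) (𝓝 0) := by
    refine (mul_zero Z ▸ hz.mul hsq).congr' ?_
    filter_upwards [self_mem_nhdsWithin] with θ (hθ : θ ≠ 0)
    field_simp
  have h : Tendsto (fun θ => (z θ * (2 * x θ + y θ + z θ) + 2 * x θ * y θ * Real.sin θ ^ 2) / θ ^ 2)
      (𝓝[≠] 0) (𝓝 (Z * (2 * X + Y) + 2 * X * Y)) := by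
    have h := (hz.mul (((hx.const_mul 2).add hy).add hz')).add
      (((hx.const_mul 2).mul hy).mul (tendsto_sin_div_self.pow 2))
    rw [add_zero, one_pow, mul_one] at h
    refine h.congr' ?_
    filter_upwards [self_mem_nhdsWithin] with θ (hθ : θ ≠ 0)
    field_simp
  refine isLittleO_norm_left.mp <|
    ((isLittleO_sq_of_tendsto_div_sq (by simp [hz0]) h).norm_left).congr_left fun θ => ?_
  rw [det_smul_diagonal_add_smul_lineProj_add_smul_one, ← Complex.ofReal_pow,
    ← Complex.ofReal_mul, ← Complex.ofReal_sub, Complex.norm_real]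

/-- Lemma 3.3: with `A = diag(2, 0)` and `B_θ` the rank-one projection onto
`(cos θ, sin θ)`, for all `p, q ∈ (0, 1)` one has
`det(((A^q + B_θ^q)/2)^(1/q) − ((A^p + B_θ^p)/2)^(1/p))
  = −θ² ((2^p+1)/2)^(1/p) ((2^q+1)/2)^(1/q) (1/(2^p+1) − 1/(2^q+1))² + o(θ²)` as `θ → 0`. -/
theorem det_powerMean_difference_expansion_degenerate (p q : ℝ)
    (hp0 : 0 < p) (hp1 : p < 1) (hq0 : 0 < q) (hq1 : q < 1) :
    (fun θ : ℝ =>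
        (Matrix.rpowH ((2 : ℂ)⁻¹ •
              (Matrix.rpowH (Matrix.diagonal ![(2 : ℂ), 0]) q +
                Matrix.rpowH !![((Real.cos θ) ^ 2 : ℂ), (Real.cos θ * Real.sin θ : ℂ);
                  (Real.cos θ * Real.sin θ : ℂ), ((Real.sin θ) ^ 2 : ℂ)] q)) (1 / q) -
          Matrix.rpowH ((2 : ℂ)⁻¹ •
              (Matrix.rpowH (Matrix.diagonal ![(2 : ℂ), 0]) p +
                Matrix.rpowH !![((Real.cos θ) ^ 2 : ℂ), (Real.cos θ * Real.sin θ : ℂ);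
                  (Real.cos θ * Real.sin θ : ℂ), ((Real.sin θ) ^ 2 : ℂ)] p)) (1 / p)).det -
        (-(((((2 : ℝ) ^ p + 1) / 2) ^ (1 / p)) * ((((2 : ℝ) ^ q + 1) / 2) ^ (1 / q)) *
            (1 / ((2 : ℝ) ^ p + 1) - 1 / ((2 : ℝ) ^ q + 1)) ^ 2 : ℝ) : ℂ) * (θ : ℂ) ^ 2)
      =o[nhds (0 : ℝ)] (fun θ : ℝ => θ ^ 2) := by
  have hx := (((tendsto_rootSlope hq0).mul_const (2 ^ q)).div_const 4).sub
    (((tendsto_rootSlope hp0).mul_const (2 ^ p)).div_const 4)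
  have hy := ((tendsto_rootSlope hq0).div_const 2).sub
    ((tendsto_rootSlope hp0).div_const 2)
  have hz := (tendsto_rootIntercept_div_sq hq0 hq1).sub (tendsto_rootIntercept_div_sq hp0 hp1)
  simp only [← sub_div] at hz
  refine (isLittleO_det_smul_diagonal_add_smul_lineProj_add_smul_one
    (hx.mono_left nhdsWithin_le_nhds) (hy.mono_left nhdsWithin_le_nhds) hz
    (by simp [rootIntercept_zero, hp0.ne', hq0.ne'])).congr_left fun θ => ?_
  rw [rpowH_powerMean hq0.ne', rpowH_powerMean hp0.ne']
  congr 3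
  · module
  · rw [← Complex.ofReal_neg]
    congr 1
    unfold meanTrace
    field_simp
    ring
end
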